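/- In Setting (V), let R(r̂) := Ř((I−P)(r⁻¹(r̂))) for r̂ ∈ X̃, assume ‖P(r⁻¹(r̂₁)) − P(r⁻¹(r̂₂))‖ ≤ C_Q·Q(r̂₁, r̂₂) for all r̂₁, r̂₂ ∈ X̃, fix β > 0 and set C̄ := 2^{2p−2}·max{1, ‖K‖^p·L_r^p, ‖K‖^p·L_r^p·C_Q^p/β}. Assume the regularization parameters satisfy η ≤ C_η·δ^p and τ̲·δ^p ≤ α·(−ψ)*(−1/(2C̄α)) ≤ τ̄·δ^p for constants C_η > 0 and 0 < τ̲ ≤ τ̄, and that (−ψ)*(−1/(C̄α)) < ∞. Let (r̂^δ, x^δ) ∈ X̃ × U be an η-minimizer of the Tikhonov functional, i.e., J(r̂^δ, x^δ) ≤ J(r̂, x) + η for all (r̂, x) ∈ X̃ × U, where J(r̂, x) := ‖K r̂ + F(x₀) − y^δ‖^p + α·R(r̂) + β·Q(r(x), r̂)^p + ‖P(x)‖^p. Then: Δ_ξ((I−P)(r⁻¹(r̂^δ)), x†) ≤ (1/(1−b))·((2+C_η)/τ̲ + 1)·(−ψ)*(−1/(2C̄α)), and 2^{1−p}·‖K(r̂^δ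 − r(x†))‖^p + β·Q(r(x^δ), r̂^δ)^p + ‖P(x^δ)‖^p ≤ 2·(2 + C_η + τ̄)·δ^p. -/

import Mathlib

/-!
Comparing the `η`-minimizer with `(r x†, x†)` bounds the misfit and penalty terms `T` together
with `α (R(x̌^δ) - R(x†))` by `δ^p + η`. By the triangle inequality, the Lipschitz continuity of
`r` and the control of `P` through `Q`, the argument of `ψ` in the source condition is at most
`C̄ (T + δ^p)`, and the Fenchel–Young inequality for `(-ψ)*` at `-1/(2 C̄ α)` turns `α ψ` of it
into `(T + δ^p) / 2 + α (-ψ)*(…)`. Inserting this into the source condition and absorbing `T`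
gives both estimates; the parameter choice converts `α (-ψ)*(…)` into multiples of `δ^p`.
-/

/-- The convex conjugate of `-ψ`: `(-ψ)*(s) = sup_{t ≥ 0} (s·t + ψ(t)) ∈ [0,∞]`. -/
noncomputable def negConj (ψ : ℝ → ℝ) (s : ℝ) : EReal :=
  ⨆ t : {t : ℝ // 0 ≤ t}, ((s * t.1 + ψ t.1 : ℝ) : EReal)

namespace Real

lemma add_rpow_le_two_rpow_mul {p x y : ℝ} (hp : 1 ≤ p) (hx : 0 ≤ x) (hy : 0 ≤ y) :
    (x + y) ^ p ≤ 2 ^ (p - 1) * (x ^ p + y ^ p) := by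
  have := rpow_sum_le_const_mul_sum_rpow_of_nonneg (s := Finset.univ) (f := ![x, y]) hp
    (by simp [Fin.forall_fin_two, hx, hy])
  simpa [Fin.sum_univ_two] using this

lemma two_rpow_one_sub_mul_add_rpow_le {p x y : ℝ} (hp : 1 ≤ p) (hx : 0 ≤ x) (hy : 0 ≤ y) :
    2 ^ (1 - p) * (x + y) ^ p ≤ x ^ p + y ^ p := by
  have h : (2 : ℝ) ^ (1 - p) * 2 ^ (p - 1) = 1 := by
    rw [← rpow_add two_pos]; norm_num
  calc 2 ^ (1 - p) * (x + y) ^ p ≤ 2 ^ (1 - p) * (2 ^ (p - 1) * (x ^ p + y ^ p)) := by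
        gcongr; exact add_rpow_le_two_rpow_mul hp hx hy
    _ = x ^ p + y ^ p := by rw [← mul_assoc, h, one_mul]

lemma add_add_add_rpow_le {p a b c d : ℝ} (hp : 1 ≤ p) (ha : 0 ≤ a) (hb : 0 ≤ b) (hc : 0 ≤ c)
    (hd : 0 ≤ d) :
    (a + b + c + d) ^ p ≤ 2 ^ (2 * p - 2) * (a ^ p + b ^ p + c ^ p + d ^ p) := by
  have := rpow_sum_le_const_mul_sum_rpow_of_nonneg (s := Finset.univ) (f := ![a, b, c, d]) hp
    (by simp [Fin.forall_fin_succ, ha, hb, hc, hd])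
  have h4 : (4 : ℝ) ^ (p - 1) = 2 ^ (2 * p - 2) := by
    rw [show (4 : ℝ) = 2 ^ (2 : ℝ) by norm_num, ← rpow_mul two_pos.le]; ring_nf
  simpa [Fin.sum_univ_four, h4, add_assoc] using this

lemma mul_posPart_rpow_le {p k L c : ℝ} (hp : 0 < p) (hc : 0 ≤ c)
    (h : 0 ≤ L → (k * L) ^ p ≤ c) : (k * L⁺) ^ p ≤ c := by
  rcases le_or_gt 0 L with hL | hL
  · rw [posPart_eq_self.2 hL]; exact h hL
  · rw [posPart_eq_zero.2 hL.le, mul_zero, zero_rpow hp.ne']; exact hc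

/-- `L` and `C` may be negative, where `Real.rpow` takes junk values; then the positive parts
vanish and the `1` in the maximum covers the bound. -/
lemma add_four_rpow_le_mul_max {p k L C β a d e q : ℝ} (hp : 1 ≤ p) (hk : 0 ≤ k) (hβ : 0 < β)
    (ha : 0 ≤ a) (hd : 0 ≤ d) (he : 0 ≤ e) (hq : 0 ≤ q) :
    (a + d + k * L⁺ * e + k * L⁺ * C⁺ * q) ^ p ≤
      2 ^ (2 * p - 2) * max (max 1 (k ^ p * L ^ p)) (k ^ p * L ^ p * C ^ p / β) *
        (a ^ p + β * q ^ p + e ^ p + d ^ p) := by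
  set M := max (max 1 (k ^ p * L ^ p)) (k ^ p * L ^ p * C ^ p / β)
  have hp0 : 0 < p := by linarith
  have hM : 1 ≤ M := (le_max_left _ _).trans (le_max_left _ _)
  have hβM : 0 ≤ β * M := by positivity
  have hkL : (k * L⁺) ^ p ≤ M := mul_posPart_rpow_le hp0 (by linarith) fun hL => by
    rw [mul_rpow hk hL]; exact (le_max_right _ _).trans (le_max_left _ _)
  have hkLC : (k * L⁺ * C⁺) ^ p ≤ β * M :=
    mul_posPart_rpow_le hp0 hβM fun hC => by
      rw [mul_right_comm]
      refine mul_posPart_rpow_le hp0 hβM fun hL => ?_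
      rw [mul_rpow (by positivity) hL, mul_rpow hk hC]
      calc k ^ p * C ^ p * L ^ p = β * (k ^ p * L ^ p * C ^ p / β) := by field_simp
        _ ≤ β * M := by gcongr; exact le_max_right _ _
  calc (a + d + k * L⁺ * e + k * L⁺ * C⁺ * q) ^ p
      ≤ 2 ^ (2 * p - 2) * (a ^ p + d ^ p + (k * L⁺) ^ p * e ^ p + (k * L⁺ * C⁺) ^ p * q ^ p) := by
        rw [← mul_rpow (by positivity) he, ← mul_rpow (by positivity) hq]
        exact add_add_add_rpow_le hp ha hd (by positivity) (by positivity)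
    _ ≤ 2 ^ (2 * p - 2) * (M * a ^ p + M * d ^ p + M * e ^ p + β * M * q ^ p) := by
        gcongr
        · exact le_mul_of_one_le_left (rpow_nonneg ha p) hM
        · exact le_mul_of_one_le_left (rpow_nonneg hd p) hM
    _ = 2 ^ (2 * p - 2) * M * (a ^ p + β * q ^ p + e ^ p + d ^ p) := by ring

end Real

lemma le_negConj (ψ : ℝ → ℝ) (s : ℝ) {t : ℝ} (ht : 0 ≤ t) :
    ((s * t + ψ t : ℝ) : EReal) ≤ negConj ψ s :=
  le_iSup (fun t : {t : ℝ // 0 ≤ t} => ((s * t.1 + ψ t.1 : ℝ) : EReal)) ⟨t, ht⟩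

lemma negConj_nonneg {ψ : ℝ → ℝ} (hψ0 : ψ 0 = 0) (s : ℝ) : 0 ≤ negConj ψ s := by
  simpa [hψ0] using le_negConj ψ s le_rfl

lemma exists_negConj_eq_coe {ψ : ℝ → ℝ} {s α c : ℝ} (hψ0 : ψ 0 = 0) (hα : 0 < α)
    (h : (α : EReal) * negConj ψ s ≤ c) : ∃ E : ℝ, negConj ψ s = E := by
  have htop : negConj ψ s ≠ ⊤ := fun htop => by
    rw [htop, EReal.coe_mul_top_of_pos hα] at h
    exact (EReal.coe_lt_top c).not_ge h
  have hbot : negConj ψ s ≠ ⊥ := ne_bot_of_le_ne_bot EReal.zero_ne_bot (negConj_nonneg hψ0 s)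
  exact ⟨_, (EReal.coe_toReal htop hbot).symm⟩

lemma apply_le_of_negConj_eq {ψ : ℝ → ℝ} {s E t : ℝ} (hE : negConj ψ s = E) (ht : 0 ≤ t) :
    ψ t ≤ E - s * t := by
  have h := le_negConj ψ s ht
  rw [hE, EReal.coe_le_coe_iff] at h
  linarith

lemma mul_apply_le_of_negConj_eq {ψ : ℝ → ℝ} {C α A B E : ℝ} (hψ : MonotoneOn ψ (Set.Ici 0))
    (hE : negConj ψ (-(1 / (2 * C * α))) = E) (hC : 0 < C) (hα : 0 < α) (hA : 0 ≤ A)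
    (hAB : A ≤ C * B) : α * ψ A ≤ B / 2 + α * E := by
  have hCB : 0 ≤ C * B := hA.trans hAB
  calc α * ψ A ≤ α * (E - -(1 / (2 * C * α)) * (C * B)) := by
        gcongr
        exact (hψ (Set.mem_Ici.2 hA) (Set.mem_Ici.2 hCB) hAB).trans (apply_le_of_negConj_eq hE hCB)
    _ = B / 2 + α * E := by field_simp; ring

lemma rates_of_tikhonov_inequalities {α b d η E T D Δ W Cη τl τu : ℝ} (hα : 0 < α) (hb : b < 1)
    (hd : 0 < d) (hCη : 0 < Cη) (hτl : 0 < τl) (hT : 0 ≤ T) (hΔ : 0 ≤ Δ)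
    (hmin : T + α * D ≤ d + η) (hvsc : (1 - b) * Δ ≤ D + W) (hW : α * W ≤ (T + d) / 2 + α * E)
    (hη : η ≤ Cη * d) (hlow : τl * d ≤ α * E) (hupp : α * E ≤ τu * d) :
    Δ ≤ 1 / (1 - b) * ((2 + Cη) / τl + 1) * E ∧ T + d ≤ 2 * (2 + Cη + τu) * d := by
  have hαvsc : α * ((1 - b) * Δ) ≤ α * D + α * W := by
    rw [← mul_add]; exact mul_le_mul_of_nonneg_left hvsc hα.le
  have hDW : 0 ≤ α * D + α * W :=
    (mul_nonneg hα.le (mul_nonneg (by linarith) hΔ)).trans hαvsc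
  refine ⟨?_, by linarith⟩
  have hΔbound : α * ((1 - b) * Δ) ≤ (3 / 2 + Cη) * d + α * E := by linarith
  have key : α * (τl * ((1 - b) * Δ)) ≤ α * ((2 + Cη + τl) * E) := by
    have h1 := mul_le_mul_of_nonneg_left hΔbound hτl.le
    have h2 := mul_le_mul_of_nonneg_left hlow (by linarith : (0 : ℝ) ≤ 3 / 2 + Cη)
    have hαE : 0 ≤ α * E := (mul_pos hτl hd).le.trans hlow
    linarith
  rw [show 1 / (1 - b) * ((2 + Cη) / τl + 1) * E = (2 + Cη + τl) * E / ((1 - b) * τl) by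
    field_simp, le_div_iff₀ (mul_pos (by linarith) hτl)]
  linarith [le_of_mul_le_mul_left key hα]

section RangeInvariance

variable {X Xt Y : Type*} [NormedAddCommGroup Xt] [NormedSpace ℝ Xt]
  [NormedAddCommGroup Y] [NormedSpace ℝ Y] {F : X → Y} {K : Xt →L[ℝ] Y} {r : X → Xt}
  {x0 xd : X} {yδ : Y} {δ : ℝ}

lemma norm_map_sub_le_residual_add (hRI : F xd - F x0 = K (r xd)) (hnoise : ‖F xd - yδ‖ ≤ δ)
    (v : Xt) :
    ‖K (v - r xd)‖ ≤ ‖K v + F x0 - yδ‖ + δ := by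
  have h : K (v - r xd) = (K v + F x0 - yδ) - (F xd - yδ) := by
    rw [map_sub, ← hRI]; abel
  rw [h]
  exact (norm_sub_le _ _).trans (by gcongr)

lemma norm_map_sub_le_of_lipschitz [NormedAddCommGroup X] {U : Set X} {P Ip : X → X}
    {Lr CQ q : ℝ} {x u : X} (hRI : F xd - F x0 = K (r xd)) (hnoise : ‖F xd - yδ‖ ≤ δ)
    (hLr : ∀ x1 ∈ U, ∀ x2 ∈ U, ‖r x1 - r x2‖ ≤ Lr * ‖x1 - x2‖) (hPIp : P u = u - Ip u)
    (hu : u ∈ U) (hIpu : Ip u ∈ U) (hPu : ‖P x - P u‖ ≤ CQ * q) (hq : 0 ≤ q) :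
    ‖K (r (Ip u) - r xd)‖ ≤
      ‖K (r u) + F x0 - yδ‖ + δ + ‖K‖ * Lr⁺ * ‖P x‖ + ‖K‖ * Lr⁺ * CQ⁺ * q := by
  have hP : ‖P u‖ ≤ ‖P x‖ + CQ⁺ * q :=
    calc ‖P u‖ ≤ ‖P x‖ + ‖P x - P u‖ := norm_le_norm_add_norm_sub _ _
      _ ≤ ‖P x‖ + CQ⁺ * q := by gcongr; exact hPu.trans (by gcongr; exact le_posPart CQ)
  have hr : ‖r (Ip u) - r u‖ ≤ Lr⁺ * ‖P u‖ :=
    calc ‖r (Ip u) - r u‖ ≤ Lr * ‖Ip u - u‖ := hLr _ hIpu _ hu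
      _ = Lr * ‖P u‖ := by rw [hPIp, ← norm_neg, neg_sub]
      _ ≤ Lr⁺ * ‖P u‖ := by gcongr; exact le_posPart Lr
  calc ‖K (r (Ip u) - r xd)‖ = ‖K (r (Ip u) - r u) + K (r u - r xd)‖ := by
        rw [← map_add, sub_add_sub_cancel]
    _ ≤ ‖K‖ * (Lr⁺ * (‖P x‖ + CQ⁺ * q)) + (‖K (r u) + F x0 - yδ‖ + δ) := by
        refine norm_add_le_of_le ((K.le_opNorm _).trans ?_)
          (norm_map_sub_le_residual_add hRI hnoise _)
        gcongr
        exact hr.trans (by gcongr)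
    _ = _ := by ring

lemma tikhonov_at_exact_le [NormedAddCommGroup X] {rinv : Xt → X} {P Ip : X → X} {Rc : X → ℝ}
    {Q : Xt → Xt → ℝ} {p α β : ℝ} (hp : 0 < p) (hRI : F xd - F x0 = K (r xd))
    (hnoise : ‖F xd - yδ‖ ≤ δ) (hrleft : rinv (r xd) = xd) (hPIp : P xd = xd - Ip xd)
    (hPxd : P xd = 0) (hQ : Q (r xd) (r xd) = 0) :
    ‖K (r xd) + F x0 - yδ‖ ^ p + α * Rc (Ip (rinv (r xd))) + β * Q (r xd) (r xd) ^ p +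
      ‖P xd‖ ^ p ≤ δ ^ p + α * Rc xd := by
  have hIp : Ip xd = xd := (sub_eq_zero.1 (hPIp.symm.trans hPxd)).symm
  have hres : ‖K (r xd) + F x0 - yδ‖ ≤ δ := by rwa [← hRI, sub_add_cancel]
  rw [hrleft, hIp, hQ, hPxd, norm_zero, Real.zero_rpow hp.ne', mul_zero, add_zero, add_zero]
  gcongr

end RangeInvariance

theorem stmt_4_general
    (p : ℝ) (hp : 1 ≤ p) (b : ℝ) (hb1 : b < 1)
    {X Xt Y : Type*} [NormedAddCommGroup X] [NormedSpace ℝ X]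
    [NormedAddCommGroup Xt] [NormedSpace ℝ Xt]
    [NormedAddCommGroup Y] [NormedSpace ℝ Y]
    (Xc : Submodule ℝ X) (U : Set X) (x0 xd : X)
    (hxdU : xd ∈ U)
    (F : X → Y) (K : Xt →L[ℝ] Y)
    (r : X → Xt) (rinv : Xt → X)
    (hrleft : ∀ x ∈ U, rinv (r x) = x)
    (hrmem : ∀ v : Xt, rinv v ∈ U) (hrright : ∀ v : Xt, r (rinv v) = v)
    (Lr : ℝ) (hLr : ∀ x1 ∈ U, ∀ x2 ∈ U, ‖r x1 - r x2‖ ≤ Lr * ‖x1 - x2‖)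
    (hRI : ∀ x ∈ U, F x - F x0 = K (r x))
    (P Ip : X → X) (hPIp : ∀ x, P x = x - Ip x)
    (hIpXc : ∀ x, Ip x ∈ Xc)
    (hPxd : P xd = 0)
    (hIprinvU : ∀ v : Xt, Ip (rinv v) ∈ U)
    (δ : ℝ) (hδ : 0 < δ) (yδ : Y) (hnoise : ‖F xd - yδ‖ ≤ δ)
    (Rc : X → ℝ)
    (ξ : X →L[ℝ] ℝ) (hξ : ∀ xc ∈ Xc, ξ (xc - xd) ≤ Rc xc - Rc xd)
    (ψ : ℝ → ℝ)
    (hψmono : MonotoneOn ψ (Set.Ici (0 : ℝ)))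
    (hψ0 : ψ 0 = 0)
    (hVSC : ∀ xc, xc ∈ Xc → xc ∈ U →
      -(ξ (xc - xd)) ≤ b * (Rc xc - Rc xd - ξ (xc - xd)) + ψ (‖K (r xc - r xd)‖ ^ p))
    (Q : Xt → Xt → ℝ) (hQnn : ∀ v1 v2, 0 ≤ Q v1 v2) (hQdiag : ∀ v, Q v v = 0)
    (CQ : ℝ) (hCQ : ∀ v1 v2 : Xt, ‖P (rinv v1) - P (rinv v2)‖ ≤ CQ * Q v1 v2)
    (β : ℝ) (hβ : 0 < β)
    (Cb : ℝ)
    (hCb : Cb = (2 : ℝ) ^ (2 * p - 2) *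
      max (max 1 (‖K‖ ^ p * Lr ^ p)) (‖K‖ ^ p * Lr ^ p * CQ ^ p / β))
    (Cη α η τl τu : ℝ) (hCη : 0 < Cη) (hα : 0 < α)
    (hτl : 0 < τl)
    (hη : η ≤ Cη * δ ^ p)
    (hpar1 : ((τl * δ ^ p : ℝ) : EReal) ≤ (α : ℝ) * negConj ψ (-(1 / (2 * Cb * α))))
    (hpar2 : ((α : ℝ) : EReal) * negConj ψ (-(1 / (2 * Cb * α))) ≤ ((τu * δ ^ p : ℝ) : EReal))
    (J : Xt → X → ℝ)
    (hJ : ∀ v x, J v x =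
      ‖K v + F x0 - yδ‖ ^ p + α * Rc (Ip (rinv v)) + β * Q (r x) v ^ p + ‖P x‖ ^ p)
    (rδ : Xt) (xδ : X) (hxδU : xδ ∈ U)
    (hmin : ∀ v : Xt, ∀ x ∈ U, J rδ xδ ≤ J v x + η) :
    Rc (Ip (rinv rδ)) - Rc xd - ξ (Ip (rinv rδ) - xd) ≤
        (1 / (1 - b)) * ((2 + Cη) / τl + 1) * (negConj ψ (-(1 / (2 * Cb * α)))).toReal ∧
      (2 : ℝ) ^ (1 - p) * ‖K (rδ - r xd)‖ ^ p + β * Q (r xδ) rδ ^ p + ‖P xδ‖ ^ p ≤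
        2 * (2 + Cη + τu) * δ ^ p := by
  have hp0 : 0 < p := by linarith
  have hCb0 : 0 < Cb := by
    rw [hCb]
    exact mul_pos (by positivity) (one_pos.trans_le ((le_max_left _ _).trans (le_max_left _ _)))
  obtain ⟨E, hE⟩ := exists_negConj_eq_coe hψ0 hα hpar2
  rw [hE, ← EReal.coe_mul, EReal.coe_le_coe_iff] at hpar1 hpar2
  set xc := Ip (rinv rδ)
  have hq : 0 ≤ Q (r xδ) rδ := hQnn _ _
  set T := ‖K rδ + F x0 - yδ‖ ^ p + β * Q (r xδ) rδ ^ p + ‖P xδ‖ ^ p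
  have hminT : T + α * (Rc xc - Rc xd) ≤ δ ^ p + η := by
    have h := hmin (r xd) xd hxdU
    have hexact := tikhonov_at_exact_le (α := α) (β := β) (Rc := Rc) hp0 (hRI xd hxdU) hnoise
      (hrleft xd hxdU) (hPIp xd) hPxd (hQdiag _)
    rw [hJ, hJ] at h
    linarith
  have harg : ‖K (r xc - r xd)‖ ^ p ≤ Cb * (T + δ ^ p) := by
    have h := norm_map_sub_le_of_lipschitz (hRI xd hxdU) hnoise hLr (hPIp _) (hrmem rδ)
      (hIprinvU rδ) (hrleft xδ hxδU ▸ hCQ (r xδ) rδ) hq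
    rw [hrright] at h
    rw [hCb]
    exact (Real.rpow_le_rpow (norm_nonneg _) h hp0.le).trans <|
      Real.add_four_rpow_le_mul_max hp (norm_nonneg K) hβ (norm_nonneg _) hδ.le (norm_nonneg _) hq
  obtain ⟨hΔ, hTδ⟩ := rates_of_tikhonov_inequalities (Δ := Rc xc - Rc xd - ξ (xc - xd)) hα hb1
    (by positivity) hCη hτl (by positivity) (by linarith [hξ xc (hIpXc _)]) hminT
    (by linarith [hVSC xc (hIpXc _) (hIprinvU rδ)])
    (mul_apply_le_of_negConj_eq hψmono hE hCb0 hα (by positivity) harg) hη hpar1 hpar2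
  refine ⟨by simpa only [hE, EReal.toReal_coe] using hΔ, ?_⟩
  have hres := Real.two_rpow_one_sub_mul_add_rpow_le hp (norm_nonneg _) hδ.le |>.trans' <|
    mul_le_mul_of_nonneg_left (Real.rpow_le_rpow (norm_nonneg _)
      (norm_map_sub_le_residual_add (hRI xd hxdU) hnoise rδ) hp0.le) (by positivity)
  linarith

/-- Convergence rates for variational regularization under range invariance and a
variational source condition (Theorem 2.2 of the paper). -/
theorem stmt_4
    (p : ℝ) (hp : 1 ≤ p) (b : ℝ) (hb0 : 0 < b) (hb1 : b < 1)
    {X Xt Y : Type*} [NormedAddCommGroup X] [NormedSpace ℝ X]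
    [NormedAddCommGroup Xt] [NormedSpace ℝ Xt]
    [NormedAddCommGroup Y] [NormedSpace ℝ Y]
    (Xc : Submodule ℝ X) (U : Set X) (x0 xd : X)
    (hx0U : x0 ∈ U) (hx0c : x0 ∈ Xc) (hxdU : xd ∈ U) (hxdc : xd ∈ Xc)
    (F : X → Y) (K : Xt →L[ℝ] Y)
    (r : X → Xt) (rinv : Xt → X)
    (hrleft : ∀ x ∈ U, rinv (r x) = x)
    (hrmem : ∀ v : Xt, rinv v ∈ U) (hrright : ∀ v : Xt, r (rinv v) = v)
    (Lr : ℝ) (hLr : ∀ x1 ∈ U, ∀ x2 ∈ U, ‖r x1 - r x2‖ ≤ Lr * ‖x1 - x2‖)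
    (hRI : ∀ x ∈ U, F x - F x0 = K (r x))
    (P Ip : X → X) (hPIp : ∀ x, P x = x - Ip x)
    (hIpXc : ∀ x, Ip x ∈ Xc)
    (hPxd : P xd = 0) (hPx0 : P x0 = 0)
    (hIprinvU : ∀ v : Xt, Ip (rinv v) ∈ U)
    (δ : ℝ) (hδ : 0 < δ) (yδ : Y) (hnoise : ‖F xd - yδ‖ ≤ δ)
    (Rc : X → ℝ) (hRcnn : ∀ x, 0 ≤ Rc x)
    (ξ : X →L[ℝ] ℝ) (hξ : ∀ xc ∈ Xc, ξ (xc - xd) ≤ Rc xc - Rc xd)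
    (ψ : ℝ → ℝ) (hψcont : ContinuousOn ψ (Set.Ici (0 : ℝ)))
    (hψmono : MonotoneOn ψ (Set.Ici (0 : ℝ)))
    (hψ0 : ψ 0 = 0) (hψnn : ∀ t : ℝ, 0 ≤ t → 0 ≤ ψ t)
    (hVSC : ∀ xc, xc ∈ Xc → xc ∈ U →
      -(ξ (xc - xd)) ≤ b * (Rc xc - Rc xd - ξ (xc - xd)) + ψ (‖K (r xc - r xd)‖ ^ p))
    (Q : Xt → Xt → ℝ) (hQnn : ∀ v1 v2, 0 ≤ Q v1 v2) (hQdiag : ∀ v, Q v v = 0)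
    (CQ : ℝ) (hCQ : ∀ v1 v2 : Xt, ‖P (rinv v1) - P (rinv v2)‖ ≤ CQ * Q v1 v2)
    (β : ℝ) (hβ : 0 < β)
    (Cb : ℝ)
    (hCb : Cb = (2 : ℝ) ^ (2 * p - 2) *
      max (max 1 (‖K‖ ^ p * Lr ^ p)) (‖K‖ ^ p * Lr ^ p * CQ ^ p / β))
    (Cη α η τl τu : ℝ) (hCη : 0 < Cη) (hα : 0 < α)
    (hτl : 0 < τl) (hτlu : τl ≤ τu)
    (hη0 : 0 ≤ η) (hη : η ≤ Cη * δ ^ p)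
    (hfin : negConj ψ (-(1 / (Cb * α))) ≠ ⊤)
    (hpar1 : ((τl * δ ^ p : ℝ) : EReal) ≤ (α : ℝ) * negConj ψ (-(1 / (2 * Cb * α))))
    (hpar2 : ((α : ℝ) : EReal) * negConj ψ (-(1 / (2 * Cb * α))) ≤ ((τu * δ ^ p : ℝ) : EReal))
    (J : Xt → X → ℝ)
    (hJ : ∀ v x, J v x =
      ‖K v + F x0 - yδ‖ ^ p + α * Rc (Ip (rinv v)) + β * Q (r x) v ^ p + ‖P x‖ ^ p)
    (rδ : Xt) (xδ : X) (hxδU : xδ ∈ U)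
    (hmin : ∀ v : Xt, ∀ x ∈ U, J rδ xδ ≤ J v x + η) :
    Rc (Ip (rinv rδ)) - Rc xd - ξ (Ip (rinv rδ) - xd) ≤
        (1 / (1 - b)) * ((2 + Cη) / τl + 1) * (negConj ψ (-(1 / (2 * Cb * α)))).toReal ∧
      (2 : ℝ) ^ (1 - p) * ‖K (rδ - r xd)‖ ^ p + β * Q (r xδ) rδ ^ p + ‖P xδ‖ ^ p ≤
        2 * (2 + Cη + τu) * δ ^ p :=
  stmt_4_general p hp b hb1 Xc U x0 xd hxdU F K r rinv hrleft hrmem hrright Lr hLr hRI P Ip hPIp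
    hIpXc hPxd hIprinvU δ hδ yδ hnoise Rc ξ hξ ψ hψmono hψ0 hVSC Q hQnn hQdiag CQ hCQ β hβ Cb hCb Cη
    α η τl τu hCη hα hτl hη hpar1 hpar2 J hJ rδ xδ hxδU hmin
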